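/- Let (A, C, B) be a recollement of abelian categories and let M be an object of C with i^*(j_*(j^*(M))) = 0 (so that the unit η_M : M → j_* j^*(M) is epic). Then there is a short exact sequence 0 → i_* i^! j_! j^*(M) → j_! j^*(M) ⊕ i_* i^!(M) → M → 0 in C, where the first map has components σ_{j_! j^*(M)} and i_* i^!(ε_M), and the second map is (−ε_M, σ_M), with σ the counit of (i_*, i^!) and ε the counit of (j_!, j^*). -/

import Mathlib

/-!
For every `X`, the counit `σ_X` of `i_* ⊣ i^!` and the unit `η_X` of `j^* ⊣ j_*` form a complex
`0 → i_* i^! X → X → j_* j^* X`. Since `j^* η_X` is invertible, `ker η_X` and `coker η_X` are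
killed by `j^*`, and so is `ker σ_X`; hence all three lie in the image of `i_*`. Maps out of that
image factor through `σ_X`, which gives exactness at `X`, and an object of that image which is
also killed by `i^!` (resp. `i^*`) is zero, which makes `σ_X` mono (resp. `η_X` epi when
`i^* j_* j^* X = 0`). The latter hypothesis passes from `M` to `N = j_! j^* M`, as
`j^* N ≅ j^* M`.
The counit `ε_M : N → M` induces a morphism between these two short exact sequences which is
invertible on the third terms, since `j^* ε_M` is. For any such morphism the left-hand square is
bicartesian, which is exactly the short exact sequence `0 → i_* i^! N → N ⊕ i_* i^! M → M → 0`.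
-/

open CategoryTheory CategoryTheory.Limits

universe v₁ v₂ v₃ u₁ u₂ u₃

/-- A recollement of abelian categories `(𝒜, 𝒞, ℬ)`, consisting of additive functors
`i_* : 𝒜 ⥤ 𝒞`, `i^*, i^! : 𝒞 ⥤ 𝒜`, `j^* : 𝒞 ⥤ ℬ`, `j_!, j_* : ℬ ⥤ 𝒞` with adjoint pairs
`(i^*, i_*)`, `(i_*, i^!)`, `(j_!, j^*)`, `(j^*, j_*)`, with `i_*`, `j_!`, `j_*` fully faithful
and the essential image of `i_*` equal to the kernel of `j^*`. -/
structure Recollement (𝒜 : Type u₁) (𝒞 : Type u₂) (ℬ : Type u₃)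
    [Category.{v₁} 𝒜] [Category.{v₂} 𝒞] [Category.{v₃} ℬ]
    [Abelian 𝒜] [Abelian 𝒞] [Abelian ℬ] where
  /-- the functor `i^* : 𝒞 ⥤ 𝒜` -/
  iStar : 𝒞 ⥤ 𝒜
  /-- the functor `i_* : 𝒜 ⥤ 𝒞` -/
  iIns : 𝒜 ⥤ 𝒞
  /-- the functor `i^! : 𝒞 ⥤ 𝒜` -/
  iShriek : 𝒞 ⥤ 𝒜
  /-- the functor `j_! : ℬ ⥤ 𝒞` -/
  jShriek : ℬ ⥤ 𝒞
  /-- the functor `j^* : 𝒞 ⥤ ℬ` -/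
  jStar : 𝒞 ⥤ ℬ
  /-- the functor `j_* : ℬ ⥤ 𝒞` -/
  jIns : ℬ ⥤ 𝒞
  iStar_additive : iStar.Additive
  iIns_additive : iIns.Additive
  iShriek_additive : iShriek.Additive
  jShriek_additive : jShriek.Additive
  jStar_additive : jStar.Additive
  jIns_additive : jIns.Additive
  /-- the adjunction `i^* ⊣ i_*` -/
  adj₁ : iStar ⊣ iIns
  /-- the adjunction `i_* ⊣ i^!` -/
  adj₂ : iIns ⊣ iShriek
  /-- the adjunction `j_! ⊣ j^*` -/
  adj₃ : jShriek ⊣ jStar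
  /-- the adjunction `j^* ⊣ j_*` -/
  adj₄ : jStar ⊣ jIns
  iIns_full : iIns.Full
  iIns_faithful : iIns.Faithful
  jShriek_full : jShriek.Full
  jShriek_faithful : jShriek.Faithful
  jIns_full : jIns.Full
  jIns_faithful : jIns.Faithful
  /-- `im i_* = ker j^*` -/
  im_eq_ker : ∀ X : 𝒞, IsZero (jStar.obj X) ↔ ∃ A₀ : 𝒜, Nonempty (iIns.obj A₀ ≅ X)

variable {𝒜 : Type u₁} {𝒞 : Type u₂} {ℬ : Type u₃}
  [Category.{v₁} 𝒜] [Category.{v₂} 𝒞] [Category.{v₃} ℬ]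
  [Abelian 𝒜] [Abelian 𝒞] [Abelian ℬ]

/-- `0 ⟶ X ⟶ Y ⟶ Z ⟶ 0` is a short exact sequence. -/
def IsSES {𝒟 : Type*} [Category 𝒟] [Abelian 𝒟] {X Y Z : 𝒟}
    (f : X ⟶ Y) (g : Y ⟶ Z) : Prop :=
  ∃ w : f ≫ g = 0, (ShortComplex.mk f g w).ShortExact

namespace CategoryTheory

section

variable {C D : Type*} [Category C] [Category D] [HasZeroMorphisms C] [HasZeroMorphisms D]
  (F : C ⥤ D) [F.PreservesZeroMorphisms]

lemma Functor.isZero_obj_kernel_of_isIso_map [F.PreservesMonomorphisms] {X Y : C} (f : X ⟶ Y)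
    [HasKernel f] [IsIso (F.map f)] : IsZero (F.obj (Limits.kernel f)) :=
  IsZero.of_mono_eq_zero (F.map (kernel.ι f)) (by
    rw [← cancel_mono (F.map f), zero_comp, ← F.map_comp, kernel.condition, F.map_zero])

lemma Functor.isZero_obj_cokernel_of_isIso_map [F.PreservesEpimorphisms] {X Y : C} (f : X ⟶ Y)
    [HasCokernel f] [IsIso (F.map f)] : IsZero (F.obj (cokernel f)) :=
  IsZero.of_epi_eq_zero (F.map (cokernel.π f)) (by
    rw [← cancel_epi (F.map f), comp_zero, ← F.map_comp, cokernel.condition, F.map_zero])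

end

namespace ShortComplex.Hom

variable {C : Type*} [Category C] [Abelian C] {S₁ S₂ : ShortComplex C} (φ : S₁ ⟶ S₂)

lemma biprod_lift_comp_desc_neg_eq_zero :
    biprod.lift S₁.f φ.τ₁ ≫ biprod.desc (-φ.τ₂) S₂.f = 0 := by
  simp [φ.comm₁₂]

lemma exact_biprod_lift_desc_neg (hS₁ : S₁.Exact) [Mono S₂.f] [Mono φ.τ₃] :
    (ShortComplex.mk _ _ φ.biprod_lift_comp_desc_neg_eq_zero).Exact := by
  rw [ShortComplex.exact_iff_exact_up_to_refinements]
  intro A t ht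
  have hcomm : t ≫ biprod.fst ≫ φ.τ₂ = t ≫ biprod.snd ≫ S₂.f := by
    simpa only [biprod.desc_eq, Preadditive.comp_add, Preadditive.comp_neg,
      neg_add_eq_zero] using ht
  have hcycle : (t ≫ biprod.fst) ≫ S₁.g = 0 := by
    rw [← cancel_mono φ.τ₃, Category.assoc, Category.assoc, ← φ.comm₂₃, reassoc_of% hcomm,
      S₂.zero, comp_zero, comp_zero, zero_comp]
  obtain ⟨A', π, hπ, x₁, hx₁⟩ := hS₁.exact_up_to_refinements _ hcycle
  refine ⟨A', π, hπ, x₁, biprod.hom_ext _ _ ?_ ?_⟩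
  · simpa using hx₁
  · rw [← cancel_mono S₂.f]
    simp only [Category.assoc, ← hcomm, reassoc_of% hx₁]
    simp [φ.comm₁₂]

lemma epi_biprod_desc_neg (hS₂ : S₂.Exact) [Epi S₁.g] [Epi S₂.g] [Epi φ.τ₃] :
    Epi (biprod.desc (-φ.τ₂) S₂.f) := by
  rw [Preadditive.epi_iff_cancel_zero]
  intro Z q hq
  have hf : S₂.f ≫ q = 0 := by simpa using biprod.inr ≫= hq
  have hτ₂ : φ.τ₂ ≫ q = 0 := by simpa using biprod.inl ≫= hq
  have hdesc : hS₂.desc q hf = 0 := by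
    rw [← cancel_epi (S₁.g ≫ φ.τ₃), comp_zero, Category.assoc, ← φ.comm₂₃_assoc, hS₂.g_desc, hτ₂]
  rw [← hS₂.g_desc q hf, hdesc, comp_zero]

theorem isSES_biprod_lift_desc_neg (hS₁ : S₁.ShortExact) (hS₂ : S₂.ShortExact) [IsIso φ.τ₃] :
    IsSES (biprod.lift S₁.f φ.τ₁) (biprod.desc (-φ.τ₂) S₂.f) := by
  have := hS₁.mono_f
  have := hS₁.epi_g
  have := hS₂.mono_f
  have := hS₂.epi_g
  have := φ.epi_biprod_desc_neg hS₂.exact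
  exact ⟨φ.biprod_lift_comp_desc_neg_eq_zero,
    { exact := φ.exact_biprod_lift_desc_neg hS₁.exact
      mono_f := mono_of_mono_fac (biprod.lift_fst _ _) }⟩

end ShortComplex.Hom

end CategoryTheory

namespace Recollement

variable (R : Recollement 𝒜 𝒞 ℬ)

attribute [instance] iShriek_additive jStar_additive iIns_full
  iIns_faithful jShriek_full jShriek_faithful jIns_full jIns_faithful

instance : R.jStar.PreservesMonomorphisms := Functor.preservesMonomorphisms_of_adjunction R.adj₃

instance : R.jStar.PreservesEpimorphisms := Functor.preservesEpimorphisms_of_adjunction R.adj₄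

instance : R.iShriek.PreservesMonomorphisms := Functor.preservesMonomorphisms_of_adjunction R.adj₂

instance : R.iStar.PreservesEpimorphisms := Functor.preservesEpimorphisms_of_adjunction R.adj₁

lemma isZero_jStar_obj_iIns_obj (A : 𝒜) : IsZero (R.jStar.obj (R.iIns.obj A)) :=
  (R.im_eq_ker _).mpr ⟨A, ⟨Iso.refl _⟩⟩

lemma isIso_adj₂_counit_app_of_isZero {T : 𝒞} (hT : IsZero (R.jStar.obj T)) :
    IsIso (R.adj₂.counit.app T) :=
  have ⟨_, ⟨e⟩⟩ := (R.im_eq_ker T).mp hT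
  R.adj₂.isIso_counit_app_of_iso e.symm

lemma isZero_of_isZero_jStar_of_isZero_iShriek {T : 𝒞} (hj : IsZero (R.jStar.obj T))
    (hi : IsZero (R.iShriek.obj T)) : IsZero T :=
  have := R.isIso_adj₂_counit_app_of_isZero hj
  (R.iIns.map_isZero hi).of_iso (asIso (R.adj₂.counit.app T)).symm

lemma isZero_of_isZero_jStar_of_isZero_iStar {T : 𝒞} (hj : IsZero (R.jStar.obj T))
    (hi : IsZero (R.iStar.obj T)) : IsZero T := by
  obtain ⟨A, ⟨e⟩⟩ := (R.im_eq_ker T).mp hj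
  have hA : IsZero A := (hi.of_iso (R.iStar.mapIso e)).of_iso (asIso (R.adj₁.counit.app A)).symm
  exact (R.iIns.map_isZero hA).of_iso e.symm

lemma exists_comp_adj₂_counit_app_eq {T X : 𝒞} (hT : IsZero (R.jStar.obj T)) (g : T ⟶ X) :
    ∃ s : T ⟶ R.iIns.obj (R.iShriek.obj X), s ≫ R.adj₂.counit.app X = g := by
  have := R.isIso_adj₂_counit_app_of_isZero hT
  exact ⟨inv (R.adj₂.counit.app T) ≫ R.iIns.map (R.iShriek.map g), by simp⟩

def canonicalComplex (X : 𝒞) : ShortComplex 𝒞 where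
  f := R.adj₂.counit.app X
  g := R.adj₄.unit.app X
  zero := by
    rw [← R.adj₄.unit_naturality (Y := X), IsZero.eq_zero_of_tgt ?_ (R.adj₄.unit.app _), zero_comp]
    exact R.jIns.map_isZero (R.isZero_jStar_obj_iIns_obj _)

def canonicalComplexMap {X Y : 𝒞} (f : X ⟶ Y) : R.canonicalComplex X ⟶ R.canonicalComplex Y where
  τ₁ := R.iIns.map (R.iShriek.map f)
  τ₂ := f
  τ₃ := R.jIns.map (R.jStar.map f)
  comm₁₂ := R.adj₂.counit_naturality f
  comm₂₃ := (R.adj₄.unit_naturality f).symm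

instance mono_adj₂_counit_app (X : 𝒞) : Mono (R.adj₂.counit.app X) := by
  refine Preadditive.mono_of_isZero_kernel _ (R.isZero_of_isZero_jStar_of_isZero_iShriek ?_
    (R.iShriek.isZero_obj_kernel_of_isIso_map _))
  exact IsZero.of_mono (R.jStar.map (kernel.ι _)) (R.isZero_jStar_obj_iIns_obj _)

lemma canonicalComplex_exact (X : 𝒞) : (R.canonicalComplex X).Exact := by
  rw [ShortComplex.exact_iff_exact_up_to_refinements]
  intro A x hx
  dsimp only [canonicalComplex] at x hx ⊢
  obtain ⟨s, hs⟩ := R.exists_comp_adj₂_counit_app_eq (X := X)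
    (R.jStar.isZero_obj_kernel_of_isIso_map (R.adj₄.unit.app X)) (kernel.ι _)
  exact ⟨A, 𝟙 A, inferInstance, kernel.lift (R.adj₄.unit.app X) x hx ≫ s, by
    rw [Category.id_comp, Category.assoc, hs, kernel.lift_ι _ x hx]⟩

lemma epi_adj₄_unit_app {X : 𝒞} (h : IsZero (R.iStar.obj (R.jIns.obj (R.jStar.obj X)))) :
    Epi (R.adj₄.unit.app X) :=
  Preadditive.epi_of_isZero_cokernel _ (R.isZero_of_isZero_jStar_of_isZero_iStar
    (R.jStar.isZero_obj_cokernel_of_isIso_map _) (IsZero.of_epi (R.iStar.map (cokernel.π _)) h))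

lemma canonicalComplex_shortExact {X : 𝒞}
    (h : IsZero (R.iStar.obj (R.jIns.obj (R.jStar.obj X)))) : (R.canonicalComplex X).ShortExact :=
  have : Mono (R.canonicalComplex X).f := R.mono_adj₂_counit_app X
  have : Epi (R.canonicalComplex X).g := R.epi_adj₄_unit_app h
  { exact := R.canonicalComplex_exact X }

end Recollement

/-- If `M` is an object of `𝒞` with `i^*(j_*(j^*(M))) = 0`, then there is a short exact
sequence `0 → i_* i^! j_! j^*(M) → j_! j^*(M) ⊕ i_* i^!(M) → M → 0` in `𝒞`, where the
first map has components `σ_{j_! j^*(M)}` and `i_* i^!(ε_M)`, and the second map is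
`(−ε_M, σ_M)`, with `σ` the counit of `(i_*, i^!)` and `ε` the counit of `(j_!, j^*)`. -/
theorem stmt_9 (R : Recollement 𝒜 𝒞 ℬ) (M : 𝒞)
    (h : IsZero (R.iStar.obj (R.jIns.obj (R.jStar.obj M)))) :
    IsSES
      (biprod.lift (R.adj₂.counit.app (R.jShriek.obj (R.jStar.obj M)))
        (R.iIns.map (R.iShriek.map (R.adj₃.counit.app M))))
      (biprod.desc (-(R.adj₃.counit.app M)) (R.adj₂.counit.app M)) := by
  have hN : IsZero (R.iStar.obj (R.jIns.obj (R.jStar.obj (R.jShriek.obj (R.jStar.obj M))))) :=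
    h.of_iso (R.iStar.mapIso (R.jIns.mapIso (asIso (R.adj₃.unit.app (R.jStar.obj M))).symm))
  have : IsIso (R.canonicalComplexMap (R.adj₃.counit.app M)).τ₃ :=
    Functor.map_isIso R.jIns (R.jStar.map _)
  exact (R.canonicalComplexMap (R.adj₃.counit.app M)).isSES_biprod_lift_desc_neg
    (R.canonicalComplex_shortExact hN) (R.canonicalComplex_shortExact h)
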